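/- The matrix U^{n+1} is diagonal, its (0,0) entry equals x · ∏_{i=1}^n (xy + (i−1)t_0 + t_1 + ⋯ + t_i), and the n factors xy + (i−1)t_0 + t_1 + ⋯ + t_i (1 ≤ i ≤ n) pairwise commute in R, so this product is independent of the order of its factors; moreover (UV)_{00} = xy. -/

import Mathlib

/-!
Context: `B = ℂ[t₀,…,tₙ]`, `R = B⟨x,y⟩/(xy − yx − t₀)`, and `U`, `V` the
`(n+1)×(n+1)` matrices over `R` defined below (restrictions of `u^t`, `v^t`).
Statement 18: `U^{n+1}` is diagonal, its `(0,0)` entry equals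
`x · ∏_{i=1}^n (xy + (i−1)t₀ + t₁ + ⋯ + tᵢ)` (an ordered product), the `n` factors
pairwise commute in `R` (so the product is independent of the order of its factors),
and `(UV)₀₀ = xy`.
-/

noncomputable section

/-- The polynomial base ring `B = ℂ[t₀,…,tₙ]`. -/
abbrev Bpoly (n : ℕ) : Type := MvPolynomial (Fin (n + 1)) ℂ

/-- The defining relation `xy = yx + t₀` of `R = B⟨x,y⟩/(xy − yx − t₀)`,
with `x = ι 0`, `y = ι 1`. -/
inductive Rrel (n : ℕ) : FreeAlgebra (Bpoly n) (Fin 2) → FreeAlgebra (Bpoly n) (Fin 2) → Prop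
  | comm : Rrel n (FreeAlgebra.ι (Bpoly n) 0 * FreeAlgebra.ι (Bpoly n) 1)
      (FreeAlgebra.ι (Bpoly n) 1 * FreeAlgebra.ι (Bpoly n) 0 +
        algebraMap (Bpoly n) (FreeAlgebra (Bpoly n) (Fin 2)) (MvPolynomial.X 0))

/-- `R = B⟨x,y⟩/(xy − yx − t₀)`. -/
abbrev Rring (n : ℕ) : Type := RingQuot (Rrel n)

/-- `x ∈ R`. -/
def Rx (n : ℕ) : Rring n := RingQuot.mkAlgHom (Bpoly n) (Rrel n) (FreeAlgebra.ι (Bpoly n) 0)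

/-- `y ∈ R`. -/
def Ry (n : ℕ) : Rring n := RingQuot.mkAlgHom (Bpoly n) (Rrel n) (FreeAlgebra.ι (Bpoly n) 1)

/-- `tⱼ ∈ R`, the image of the deformation parameter `tⱼ` (`0 ≤ j ≤ n`). -/
def Rt (n : ℕ) (j : ℕ) : Rring n :=
  algebraMap (Bpoly n) (Rring n) (MvPolynomial.X (open Fin.NatCast in (j : Fin (n + 1))))

/-- `d i = xy + (i−1)t₀ + t₁ + ⋯ + tᵢ ∈ R` (for `1 ≤ i ≤ n`). -/
def dEl (n : ℕ) (i : ℕ) : Rring n :=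
  Rx n * Ry n + (i - 1) • Rt n 0 + ∑ j ∈ Finset.Icc 1 i, Rt n j

/-- The matrix `U` over `R` (restriction of `u^t` to the chart `𝓡₀`):
`U_{0,1} = x`, `U_{i,i+1} = xy + (i−1)t₀ + t₁ + ⋯ + tᵢ` for `1 ≤ i ≤ n−1`,
`U_{n,0} = xy + (n−1)t₀ + t₁ + ⋯ + tₙ`, all other entries `0`. -/
def Umat (n : ℕ) : Matrix (Fin (n + 1)) (Fin (n + 1)) (Rring n) :=
  Matrix.of fun i j => if j = i + 1 then (if i = 0 then Rx n else dEl n (i : ℕ)) else 0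

/-- The matrix `V` over `R` (restriction of `v^t` to the chart `𝓡₀`):
`V_{1,0} = y`, `V_{i+1,i} = 1` for `1 ≤ i ≤ n−1`, `V_{0,n} = 1`,
all other entries `0`. -/
def Vmat (n : ℕ) : Matrix (Fin (n + 1)) (Fin (n + 1)) (Rring n) :=
  Matrix.of fun i j => if i = j + 1 then (if j = 0 then Ry n else 1) else 0

/-- Diagonal weight function of `U`. -/
def wEl (n : ℕ) (l : Fin (n + 1)) : Rring n := if l = 0 then Rx n else dEl n (l : ℕ)

lemma Umat_apply (n : ℕ) (i j : Fin (n + 1)) :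
    Umat n i j = if j = i + 1 then wEl n i else 0 := rfl

lemma Rt_commute (n j : ℕ) (r : Rring n) : Commute (Rt n j) r :=
  (Algebra.commutes _ r)

lemma cEl_commute (n i : ℕ) (r : Rring n) :
    Commute ((i - 1) • Rt n 0 + ∑ j ∈ Finset.Icc 1 i, Rt n j) r := by
  refine Commute.add_left ((Rt_commute n 0 r).smul_left _) ?_
  exact Finset.sum_induction _ (fun a => Commute a r)
    (fun a b ha hb => ha.add_left hb) (Commute.zero_left r)
    (fun j _ => Rt_commute n j r)

lemma dEl_commute (n i j : ℕ) : Commute (dEl n i) (dEl n j) := by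
  unfold dEl
  rw [add_assoc, add_assoc]
  exact Commute.add_left
    (Commute.add_right (Commute.refl _) ((cEl_commute n j _).symm))
    (cEl_commute n i _)

open Fin.NatCast in
lemma Upow_apply (n k : ℕ) (i j : Fin (n + 1)) :
    (Umat n ^ k) i j =
      if j = i + (k : Fin (n + 1)) then
        ((List.range k).map (fun m : ℕ => wEl n (i + (m : Fin (n + 1))))).prod
      else 0 := by
  induction k generalizing j with
  | zero => simp [Matrix.one_apply, eq_comm]
  | succ k ih =>
    rw [pow_succ, Matrix.mul_apply]
    simp only [ih, ite_mul, zero_mul, Finset.sum_ite_eq', Finset.mem_univ, if_true]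
    rw [Umat_apply, mul_ite, mul_zero]
    have hc : ((k + 1 : ℕ) : Fin (n + 1)) = (k : Fin (n + 1)) + 1 := by
      push_cast; ring
    rw [hc, ← add_assoc]
    by_cases h : j = i + (k : Fin (n + 1)) + 1
    · rw [if_pos h, if_pos h, List.range_succ, List.map_append, List.prod_append,
        List.map_singleton, List.prod_singleton]
    · rw [if_neg h, if_neg h]

open Fin.NatCast in
theorem stmt18 (n : ℕ) (hn : 1 ≤ n) :
    (∀ i j : Fin (n + 1), i ≠ j → (Umat n ^ (n + 1)) i j = 0) ∧
    (Umat n ^ (n + 1)) 0 0 = Rx n * ((List.range n).map (fun k => dEl n (k + 1))).prod ∧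
    (∀ i j : ℕ, 1 ≤ i → i ≤ n → 1 ≤ j → j ≤ n → dEl n i * dEl n j = dEl n j * dEl n i) ∧
    (Umat n * Vmat n) 0 0 = Rx n * Ry n := by
  have hcast : ((n + 1 : ℕ) : Fin (n + 1)) = 0 := by
    simp [Fin.natCast_self]
  refine ⟨?_, ?_, ?_, ?_⟩
  · intro i j hij
    rw [Upow_apply, hcast, add_zero, if_neg (fun h => hij h.symm)]
  · rw [Upow_apply, hcast, add_zero, if_pos rfl]
    rw [List.range_succ_eq_map, List.map_cons, List.prod_cons, List.map_map]
    congr 1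
    · refine congrArg List.prod (List.map_congr_left fun m hm => ?_)
      have hmn : m < n := List.mem_range.mp hm
      have hv : (((Nat.succ m : ℕ) : Fin (n + 1)) : ℕ) = m + 1 :=
        Fin.val_cast_of_lt (by omega)
      show wEl n ((0 : Fin (n + 1)) + ((Nat.succ m : ℕ) : Fin (n + 1))) = dEl n (m + 1)
      rw [zero_add, wEl, if_neg (by
        intro h
        rw [h] at hv
        simp at hv), hv]
  · intro i j _ _ _ _
    exact dEl_commute n i j
  · rw [Matrix.mul_apply]
    simp only [Umat_apply, ite_mul, zero_mul, Finset.sum_ite_eq', Finset.mem_univ, if_true]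
    show wEl n 0 * Vmat n (0 + 1) 0 = _
    rw [wEl, if_pos rfl]
    show Rx n * (if (0 + 1 : Fin (n + 1)) = 0 + 1 then (if (0 : Fin (n+1)) = 0 then Ry n else 1) else 0) = _
    rw [if_pos rfl, if_pos rfl]

end
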